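/- For any monoid M and any M-pigmented words p, p' of the same arity, p ∼ p' if and only if first_1(p) = first_1(p') and first_1^R(p) = first_1^R(p'). -/

import Mathlib

/-- An `M`-pigmented word of arity `n`: a list of letters `(i, α)` whose value is
`i ∈ Fin n` (representing the value `i + 1 ∈ {1, …, n}`) and whose pigment is `α ∈ M`. -/
abbrev PW (M : Type*) (n : ℕ) : Type _ := List (Fin n × M)

/-- The value `i` occurs in the word `p`. -/
def hasVal {M : Type*} {n : ℕ} (p : PW M n) (i : Fin n) : Prop := ∃ l ∈ p, l.1 = i

/-- `⤳₁`: delete a letter whose value occurs both before and after it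
(a position which is neither a left `1`-witness nor a right `1`-witness). -/
def Step1 {M : Type*} {n : ℕ} (u v : PW M n) : Prop :=
  ∃ (p p' : PW M n) (i : Fin n) (α : M),
    u = p ++ (i, α) :: p' ∧ v = p ++ p' ∧ hasVal p i ∧ hasVal p' i

/-- `⤳₂`: swap two adjacent letters `i₁^{α₁} i₂^{α₂}` with distinct values, where
`i₁` occurs after, `i₂` occurs before, and `i₂` does not occur after. -/
def Step2 {M : Type*} {n : ℕ} (u v : PW M n) : Prop :=
  ∃ (p p' : PW M n) (i₁ i₂ : Fin n) (α₁ α₂ : M),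
    u = p ++ (i₁, α₁) :: (i₂, α₂) :: p' ∧ v = p ++ (i₂, α₂) :: (i₁, α₁) :: p' ∧
    i₁ ≠ i₂ ∧ hasVal p' i₁ ∧ hasVal p i₂ ∧ ¬ hasVal p' i₂

/-- `⤳₃`: contract two equal adjacent letters to one. -/
def Step3 {M : Type*} {n : ℕ} (u v : PW M n) : Prop :=
  ∃ (p p' : PW M n) (i : Fin n) (α : M),
    u = p ++ (i, α) :: (i, α) :: p' ∧ v = p ++ (i, α) :: p'

/-- The union `⤳₁ ∪ ⤳₂ ∪ ⤳₃`; the relation `∼` is its reflexive, symmetric and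
transitive closure `Relation.EqvGen MagnStep`. -/
def MagnStep {M : Type*} {n : ℕ} (u v : PW M n) : Prop := Step1 u v ∨ Step2 u v ∨ Step3 u v

/-- `firstKAux k pre p` keeps those letters of `p` whose position is a left
`k`-witness, given that the prefix `pre` has already been read. -/
def firstKAux {M : Type*} {n : ℕ} (k : ℕ) : PW M n → PW M n → PW M n
  | _, [] => []
  | pre, l :: t =>
    if pre.countP (fun x => decide (x.1 = l.1)) < k
    then l :: firstKAux k (pre ++ [l]) t
    else firstKAux k (pre ++ [l]) t

/-- `firstK k p` keeps, for each value, the first `k` occurrences of that value in `p`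
(the letters at left `k`-witness positions). -/
def firstK {M : Type*} {n : ℕ} (k : ℕ) (p : PW M n) : PW M n := firstKAux k [] p

/-- `firstKR k p` keeps, for each value, the last `k` occurrences of that value in `p`:
it is the reverse of `firstK k` applied to the reverse of `p`. -/
def firstKR {M : Type*} {n : ℕ} (k : ℕ) (p : PW M n) : PW M n := (firstK k p.reverse).reverse

/-! The moves `⤳₁`, `⤳₂`, `⤳₃` only delete or transpose letters that are neither the first nor
the last occurrence of their value, so `first₁` and `first₁^R` are invariants of `∼`.
Conversely every word `p` is equivalent to the normal form `first₁(p) · first₁^R(p)`, by induction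
on `p`: to put `a · first₁(q) · first₁^R(q)` in normal form, use `⤳₁` to delete the old first
occurrence of the value of `a` if it has one; otherwise `a` is also a last occurrence, so double
it with `⤳₃` and slide the copy across `first₁(q)` with `⤳₂`. -/

open Relation

section
variable {M : Type*} {n : ℕ}

instance (p : PW M n) (i : Fin n) : Decidable (hasVal p i) :=
  inferInstanceAs (Decidable (∃ l ∈ p, l.1 = i))

@[simp]
lemma not_hasVal_nil (i : Fin n) : ¬ hasVal ([] : PW M n) i := by
  simp [hasVal]

@[simp]
lemma hasVal_cons {a : Fin n × M} {p : PW M n} {i : Fin n} :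
    hasVal (a :: p) i ↔ a.1 = i ∨ hasVal p i := by
  simp [hasVal]

@[simp]
lemma hasVal_append {p q : PW M n} {i : Fin n} :
    hasVal (p ++ q) i ↔ hasVal p i ∨ hasVal q i := by
  simp [hasVal, or_and_right, exists_or]

@[simp]
lemma hasVal_reverse {p : PW M n} {i : Fin n} : hasVal p.reverse i ↔ hasVal p i := by
  simp [hasVal]

lemma firstKAux_append (k : ℕ) (pre X Y : PW M n) :
    firstKAux k pre (X ++ Y) = firstKAux k pre X ++ firstKAux k (pre ++ X) Y := by
  induction X generalizing pre with
  | nil => simp [firstKAux]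
  | cons l X ih => simp only [List.cons_append, firstKAux, ih]; split_ifs <;> simp

lemma countP_fst_eq_lt_one_iff (p : PW M n) (i : Fin n) :
    p.countP (fun x => decide (x.1 = i)) < 1 ↔ ¬ hasVal p i := by
  rw [Nat.lt_one_iff, List.countP_eq_zero]
  simp only [hasVal, decide_eq_true_eq, not_exists, not_and]

lemma firstKAux_one_singleton (pre : PW M n) (b : Fin n × M) :
    firstKAux 1 pre [b] = [b].filter (fun x => ¬ hasVal pre x.1) := by
  rw [firstKAux, firstKAux, List.filter_singleton]
  by_cases h : hasVal pre b.1 <;> simp only [countP_fst_eq_lt_one_iff, h] <;> simp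

lemma firstKAux_one_eq_filter (pre t : PW M n) :
    firstKAux 1 pre t = (firstK 1 t).filter (fun x => ¬ hasVal pre x.1) := by
  induction t using List.reverseRecOn with
  | nil => simp [firstK, firstKAux]
  | append_singleton t b ih =>
    rw [firstK, firstKAux_append, firstKAux_append, ih, firstKAux_one_singleton,
      firstKAux_one_singleton]
    simp [List.filter_filter, firstK]

lemma firstK_one_append (X Y : PW M n) :
    firstK 1 (X ++ Y) = firstK 1 X ++ (firstK 1 Y).filter (fun x => ¬ hasVal X x.1) := by
  rw [firstK, firstKAux_append, List.nil_append, firstKAux_one_eq_filter X Y]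
  rfl

@[simp]
lemma firstK_one_singleton (a : Fin n × M) : firstK 1 [a] = [a] := rfl

lemma firstK_one_cons (a : Fin n × M) (q : PW M n) :
    firstK 1 (a :: q) = a :: (firstK 1 q).filter (fun x => x.1 ≠ a.1) := by
  rw [← List.singleton_append, firstK_one_append]
  simp [eq_comm]

@[simp]
lemma hasVal_firstK_one {p : PW M n} {i : Fin n} : hasVal (firstK 1 p) i ↔ hasVal p i := by
  induction p with
  | nil => rfl
  | cons a q ih =>
    rw [firstK_one_cons]
    simp only [hasVal, List.mem_cons, List.mem_filter] at ih ⊢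
    grind

@[simp]
lemma hasVal_firstKR_one {p : PW M n} {i : Fin n} : hasVal (firstKR 1 p) i ↔ hasVal p i := by
  simp [firstKR]

lemma firstK_one_cons_of_not_hasVal {a : Fin n × M} {q : PW M n} (ha : ¬ hasVal q a.1) :
    firstK 1 (a :: q) = a :: firstK 1 q := by
  rw [firstK_one_cons, List.filter_eq_self.2]
  intro x hx
  simpa using fun h => ha (hasVal_firstK_one.1 ⟨x, hx, h⟩)

lemma firstKR_one_cons_of_hasVal {a : Fin n × M} {q : PW M n} (ha : hasVal q a.1) :
    firstKR 1 (a :: q) = firstKR 1 q := by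
  simp [firstKR, firstK_one_append, ha]

lemma firstKR_one_cons_of_not_hasVal {a : Fin n × M} {q : PW M n} (ha : ¬ hasVal q a.1) :
    firstKR 1 (a :: q) = a :: firstKR 1 q := by
  simp [firstKR, firstK_one_append, ha]

lemma firstK_one_append_cons_of_hasVal {X Y : PW M n} {a : Fin n × M} (h : hasVal X a.1) :
    firstK 1 (X ++ a :: Y) = firstK 1 (X ++ Y) := by
  rw [firstK_one_append, firstK_one_append, firstK_one_cons, List.filter_cons_of_neg (by simpa),
    List.filter_filter]
  congr 1
  refine List.filter_congr fun x _ => ?_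
  by_cases hx : x.1 = a.1 <;> simp [hx, h]

lemma firstK_one_swap {X Y : PW M n} {a b : Fin n × M} (hb : hasVal X b.1) :
    firstK 1 (X ++ a :: b :: Y) = firstK 1 (X ++ b :: a :: Y) := by
  rw [firstK_one_append_cons_of_hasVal hb, ← List.singleton_append, ← List.append_assoc,
    firstK_one_append_cons_of_hasVal (by simp [hb]), List.append_assoc, List.singleton_append]

lemma firstK_one_dup {X Y : PW M n} {a : Fin n × M} :
    firstK 1 (X ++ a :: a :: Y) = firstK 1 (X ++ a :: Y) := by
  rw [← List.singleton_append, ← List.append_assoc, firstK_one_append_cons_of_hasVal (by simp),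
    List.append_assoc, List.singleton_append]

variable {u v : PW M n}

lemma firstK_one_eq_of_magnStep (h : MagnStep u v) : firstK 1 u = firstK 1 v := by
  rcases h with ⟨X, Y, i, α, rfl, rfl, hX, -⟩ | ⟨X, Y, i₁, i₂, α₁, α₂, rfl, rfl, -, -, hX, -⟩ |
    ⟨X, Y, i, α, rfl, rfl⟩
  · exact firstK_one_append_cons_of_hasVal hX
  · exact firstK_one_swap hX
  · exact firstK_one_dup

lemma firstKR_one_eq_of_magnStep (h : MagnStep u v) : firstKR 1 u = firstKR 1 v := by
  rw [firstKR, firstKR]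
  congr 1
  -- after reversal each move still erases or transposes a letter whose value occurs earlier
  rcases h with ⟨X, Y, i, α, rfl, rfl, -, hY⟩ | ⟨X, Y, i₁, i₂, α₁, α₂, rfl, rfl, -, hY, -, -⟩ |
    ⟨X, Y, i, α, rfl, rfl⟩
  · simpa using firstK_one_append_cons_of_hasVal (Y := X.reverse) (a := (i, α))
      (hasVal_reverse.2 hY)
  · simpa using (firstK_one_swap (Y := X.reverse) (a := (i₂, α₂)) (b := (i₁, α₁))
      (hasVal_reverse.2 hY))
  · simpa using firstK_one_dup (X := Y.reverse) (Y := X.reverse) (a := (i, α))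

lemma magnStep_cons (a : Fin n × M) (h : MagnStep u v) : MagnStep (a :: u) (a :: v) := by
  rcases h with ⟨X, Y, i, α, rfl, rfl, hX, hY⟩ | ⟨X, Y, i₁, i₂, α₁, α₂, rfl, rfl, hne, h₁, h₂, h₃⟩ |
    ⟨X, Y, i, α, rfl, rfl⟩
  · exact Or.inl ⟨a :: X, Y, i, α, rfl, rfl, hasVal_cons.2 (Or.inr hX), hY⟩
  · exact Or.inr <| Or.inl ⟨a :: X, Y, i₁, i₂, α₁, α₂, rfl, rfl, hne, h₁,
      hasVal_cons.2 (Or.inr h₂), h₃⟩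
  · exact Or.inr <| Or.inr ⟨a :: X, Y, i, α, rfl, rfl⟩

lemma eqvGen_cons (a : Fin n × M) (h : EqvGen MagnStep u v) :
    EqvGen MagnStep (a :: u) (a :: v) := by
  induction h with
  | rel _ _ h => exact .rel _ _ (magnStep_cons a h)
  | refl => exact .refl _
  | symm _ _ _ ih => exact .symm _ _ ih
  | trans _ _ _ _ _ ih₁ ih₂ => exact .trans _ _ _ ih₁ ih₂

lemma eqvGen_append_filter {C Y : PW M n} {i : Fin n} (hC : hasVal C i) (hY : hasVal Y i)
    (X : PW M n) : EqvGen MagnStep (C ++ X ++ Y) (C ++ X.filter (fun x => x.1 ≠ i) ++ Y) := by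
  induction X generalizing C with
  | nil => exact .refl _
  | cons b X ih =>
    by_cases hb : b.1 = i
    · have step : MagnStep (C ++ b :: X ++ Y) (C ++ X ++ Y) :=
        Or.inl ⟨C, X ++ Y, b.1, b.2, by simp, by simp, hb ▸ hC, by simp [hb, hY]⟩
      simpa [hb] using EqvGen.trans _ _ _ (.rel _ _ step) (ih hC)
    · simpa [hb] using ih (C := C ++ [b]) (by simp [hC])

lemma eqvGen_slide {C Y : PW M n} {a : Fin n × M} (hC : hasVal C a.1) (hY : ¬ hasVal Y a.1)
    (X : PW M n) (hX : ¬ hasVal X a.1) (hXY : ∀ j, hasVal X j → hasVal Y j) :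
    EqvGen MagnStep (C ++ a :: (X ++ Y)) (C ++ X ++ a :: Y) := by
  induction X generalizing C with
  | nil => simpa using .refl _
  | cons b X ih =>
    have hbY : hasVal Y b.1 := hXY b.1 (by simp)
    have swap : MagnStep (C ++ b :: a :: (X ++ Y)) (C ++ a :: b :: (X ++ Y)) :=
      Or.inr <| Or.inl ⟨C, X ++ Y, b.1, a.1, b.2, a.2, rfl, rfl, fun h => hY (h ▸ hbY),
        by simp [hbY], hC, by simp_all⟩
    have rest := ih (C := C ++ [b]) (by simp [hC]) (by simp_all) fun j hj => hXY j (by simp [hj])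
    simpa using EqvGen.trans _ _ _ (.symm _ _ (.rel _ _ swap)) (by simpa using rest)

lemma eqvGen_firstK_one_append_firstKR_one (p : PW M n) :
    EqvGen MagnStep p (firstK 1 p ++ firstKR 1 p) := by
  induction p with
  | nil => exact .refl _
  | cons a q ih =>
    refine EqvGen.trans _ _ _ (eqvGen_cons a ih) ?_
    by_cases ha : hasVal q a.1
    · rw [firstK_one_cons, firstKR_one_cons_of_hasVal ha]
      simpa using
        eqvGen_append_filter (C := [a]) (by simp) (hasVal_firstKR_one.2 ha) (firstK 1 q)
    · rw [firstK_one_cons_of_not_hasVal ha, firstKR_one_cons_of_not_hasVal ha]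
      have dup : MagnStep ([a] ++ a :: (firstK 1 q ++ firstKR 1 q))
          (a :: (firstK 1 q ++ firstKR 1 q)) :=
        Or.inr <| Or.inr ⟨[], _, a.1, a.2, rfl, rfl⟩
      have slide : EqvGen MagnStep ([a] ++ a :: (firstK 1 q ++ firstKR 1 q))
          ([a] ++ firstK 1 q ++ a :: firstKR 1 q) :=
        eqvGen_slide (by simp) (by simpa) (firstK 1 q) (by simpa) fun j hj => by simpa using hj
      simpa using EqvGen.trans _ _ _ (.symm _ _ (.rel _ _ dup)) slide

end

theorem eqvGen_iff_first_one_general (M : Type*) (n : ℕ) (p p' : PW M n) :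
    Relation.EqvGen MagnStep p p' ↔
      (firstK 1 p = firstK 1 p' ∧ firstKR 1 p = firstKR 1 p') := by
  refine ⟨fun h => ⟨?_, ?_⟩, fun ⟨hF, hR⟩ => ?_⟩
  · exact congrArg (Quot.lift (firstK 1) fun _ _ => firstK_one_eq_of_magnStep)
      (Quot.eqvGen_sound h)
  · exact congrArg (Quot.lift (firstKR 1) fun _ _ => firstKR_one_eq_of_magnStep)
      (Quot.eqvGen_sound h)
  · have h' := eqvGen_firstK_one_append_firstKR_one p'
    rw [← hF, ← hR] at h'
    exact EqvGen.trans _ _ _ (eqvGen_firstK_one_append_firstKR_one p) (.symm _ _ h')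

/-- Two `M`-pigmented words of the same arity are `∼`-equivalent if and only if they
have the same `first₁` and `first₁^R` images. -/
theorem eqvGen_iff_first_one (M : Type*) [Monoid M] (n : ℕ) (p p' : PW M n) :
    Relation.EqvGen MagnStep p p' ↔
      (firstK 1 p = firstK 1 p' ∧ firstKR 1 p = firstKR 1 p') :=
  eqvGen_iff_first_one_general M n p p'
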